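/- Let G1 and G2 be connected, 2-edge-connected graphs on the same edge set with L(G1) = L(G2), such that L(G1) has at least two circuits and, for each i, every series class of Gi is an ear of Gi. Then a set of edges is the edge set of an ear of G1 if and only if it is the edge set of an ear of G2. -/

import Mathlib

open Finset

/-- A multigraph with vertex type `V`, edge-label type `α`, edge set `E`,
and an endpoints function assigning to each edge an unordered pair of vertices. -/
structure MGraph (V : Type) (α : Type) where
  E : Finset α
  ends : α → Sym2 V

namespace MGraph

variable {V V₁ V₂ : Type} {α : Type} [DecidableEq V] [DecidableEq V₁] [DecidableEq V₂]
  [DecidableEq α]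

/-- `u` and `v` are joined by an edge of `X`. -/
def Adj (G : MGraph V α) (X : Finset α) (u v : V) : Prop :=
  ∃ e ∈ X, G.ends e = s(u, v)

/-- `v` is incident with an edge of `X`. -/
def VIn (G : MGraph V α) (X : Finset α) (v : V) : Prop :=
  ∃ e ∈ X, v ∈ G.ends e

/-- The degree of `v` in the edge set `X` (loops count twice). -/
def degIn (G : MGraph V α) (X : Finset α) (v : V) : ℕ :=
  ∑ e ∈ X, (if G.ends e = s(v, v) then 2 else if v ∈ G.ends e then 1 else 0)

/-- `C` is the edge set of a cycle of `G`: a nonempty connected 2-regular subgraph. -/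
def IsCycle (G : MGraph V α) (C : Finset α) : Prop :=
  C.Nonempty ∧ C ⊆ G.E ∧ (∀ v, G.VIn C v → G.degIn C v = 2) ∧
    ∀ u v, G.VIn C u → G.VIn C v → Relation.ReflTransGen (G.Adj C) u v

/-- The subgraph on edge set `X` contains at least two (distinct) cycles. -/
def TwoCycles (G : MGraph V α) (X : Finset α) : Prop :=
  ∃ C₁ C₂ : Finset α, G.IsCycle C₁ ∧ G.IsCycle C₂ ∧ C₁ ⊆ X ∧ C₂ ⊆ X ∧ C₁ ≠ C₂

/-- `X` is a circuit of the bicircular lift matroid `L(G)`: a minimal edge set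
containing at least two cycles. -/
def LiftCircuit (G : MGraph V α) (X : Finset α) : Prop :=
  X ⊆ G.E ∧ G.TwoCycles X ∧ ∀ Y ⊂ X, ¬ G.TwoCycles Y

/-- `X` is independent in the bicircular lift matroid `L(G)`. -/
def LiftIndep (G : MGraph V α) (X : Finset α) : Prop :=
  X ⊆ G.E ∧ ∀ C ⊆ X, ¬ G.LiftCircuit C

/-- `L(G)` has at least two circuits. -/
def TwoLiftCircuits (G : MGraph V α) : Prop :=
  ∃ X Y : Finset α, G.LiftCircuit X ∧ G.LiftCircuit Y ∧ X ≠ Y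

/-- Equality of the bicircular lift matroids `L(G₁) = L(G₂)` (equal ground sets
and equal circuit collections). -/
def LiftEq (G₁ : MGraph V₁ α) (G₂ : MGraph V₂ α) : Prop :=
  G₁.E = G₂.E ∧ ∀ X : Finset α, G₁.LiftCircuit X ↔ G₂.LiftCircuit X

/-- `G₁` and `G₂` are 2-isomorphic, i.e. their graphic matroids on the common
edge set are equal (equivalently, they have the same cycles). -/
def TwoIso (G₁ : MGraph V₁ α) (G₂ : MGraph V₂ α) : Prop :=
  G₁.E = G₂.E ∧ ∀ X : Finset α, G₁.IsCycle X ↔ G₂.IsCycle X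

/-- `G` has no loops. -/
def Loopless (G : MGraph V α) : Prop := ∀ e ∈ G.E, ¬ (G.ends e).IsDiag

/-- `G` is connected. -/
def Connected (G : MGraph V α) : Prop :=
  ∀ u v : V, Relation.ReflTransGen (G.Adj G.E) u v

/-- `G` is 2-edge-connected: every edge lies in a cycle. -/
def TwoEdgeConnected (G : MGraph V α) : Prop :=
  ∀ e ∈ G.E, ∃ C : Finset α, G.IsCycle C ∧ e ∈ C

/-- `e` is a cut-edge of `G`: an edge contained in no cycle. -/
def IsCutEdge (G : MGraph V α) (e : α) : Prop :=
  e ∈ G.E ∧ ∀ C : Finset α, G.IsCycle C → e ∉ C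

/-- Deletion of the edge `e` from `G`. -/
def delete (G : MGraph V α) (e : α) : MGraph V α :=
  ⟨G.E.erase e, G.ends⟩

/-- Restriction of `G` to the edge set `X`. -/
def restrict (G : MGraph V α) (X : Finset α) : MGraph V α :=
  ⟨G.E ∩ X, G.ends⟩

/-- Contraction of the link `e` with endpoints `u, v`: the edge `e` is deleted
and the vertex `v` is identified with `u`. -/
def contractLink (G : MGraph V α) (e : α) (u v : V) : MGraph V α :=
  ⟨G.E.erase e, fun f => (G.ends f).map (fun w => if w = v then u else w)⟩

/-- `X` is a circuit of the contraction `M/e`, where `M` is the matroid with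
circuit collection `Circ`: the circuits of `M/e` are the minimal nonempty sets of
the form `C \ {e}` with `C` a circuit of `M`. -/
def ContractCircuit (Circ : Finset α → Prop) (e : α) (X : Finset α) : Prop :=
  (X.Nonempty ∧ ∃ C : Finset α, Circ C ∧ X = C.erase e) ∧
    ∀ Y ⊂ X, ¬ (Y.Nonempty ∧ ∃ C : Finset α, Circ C ∧ Y = C.erase e)

/-- `e` and `f` form a series pair: no cycle contains exactly one of them. -/
def SeriesPair (G : MGraph V α) (e f : α) : Prop :=
  e ∈ G.E ∧ f ∈ G.E ∧ ∀ C : Finset α, G.IsCycle C → (e ∈ C ↔ f ∈ C)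

/-- `X` is a series class of `G`: a maximal set of pairwise series edges. -/
def SeriesClass (G : MGraph V α) (X : Finset α) : Prop :=
  X ⊆ G.E ∧ X.Nonempty ∧ (∀ e ∈ X, ∀ f ∈ X, G.SeriesPair e f) ∧
    ∀ g ∈ G.E, (∀ e ∈ X, G.SeriesPair e g) → g ∈ X

/-- `G` is cosimple: no cut-edges and no nontrivial series classes. -/
def CoSimple (G : MGraph V α) : Prop :=
  (∀ e ∈ G.E, ¬ G.IsCutEdge e) ∧
    ∀ e ∈ G.E, ∀ f ∈ G.E, e ≠ f → ¬ G.SeriesPair e f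

/-- `e` and `f` are parallel edges. -/
def Parallel (G : MGraph V α) (e f : α) : Prop :=
  e ≠ f ∧ G.IsCycle {e, f}

/-- `P` is a parallel class of `G`: a maximal set of pairwise parallel non-loop
edges. -/
def ParallelClass (G : MGraph V α) (P : Finset α) : Prop :=
  P ⊆ G.E ∧ P.Nonempty ∧ (∀ e ∈ P, ¬ (G.ends e).IsDiag) ∧
    (∀ e ∈ P, ∀ f ∈ P, e ≠ f → G.Parallel e f) ∧
    ∀ g ∈ G.E, g ∉ P → ¬ (G.ends g).IsDiag → ∃ e ∈ P, ¬ G.Parallel e g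

/-- `P` is the edge set of a path of `G`: nonempty, acyclic, connected, with all
degrees at most two. -/
def IsPath (G : MGraph V α) (P : Finset α) : Prop :=
  P.Nonempty ∧ P ⊆ G.E ∧ (∀ C ⊆ P, ¬ G.IsCycle C) ∧
    (∀ v, G.VIn P v → G.degIn P v ≤ 2) ∧
    ∀ u v, G.VIn P u → G.VIn P v → Relation.ReflTransGen (G.Adj P) u v

/-- `P` is the edge set of a path of `G` with end-vertices `x` and `y`. -/
def PathBetween (G : MGraph V α) (P : Finset α) (x y : V) : Prop :=
  G.IsPath P ∧ x ≠ y ∧ G.degIn P x = 1 ∧ G.degIn P y = 1 ∧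
    ∀ v, G.degIn P v = 1 → v = x ∨ v = y

/-- `P` is the edge set of an ear of `G`: a path contained in a cycle, whose
internal vertices have degree two in `G` and whose end-vertices have degree at
least three in `G`. -/
def IsEar (G : MGraph V α) (P : Finset α) : Prop :=
  G.IsPath P ∧ (∀ v, G.degIn P v = 2 → G.degIn G.E v = 2) ∧
    (∀ v, G.degIn P v = 1 → 3 ≤ G.degIn G.E v) ∧
    ∃ C : Finset α, G.IsCycle C ∧ P ⊆ C

/-- `G` is a subdivision of `K_2^n`: two distinct branch vertices joined by `n`
internally disjoint paths whose edge sets partition `E(G)`. -/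
def IsK2nSub (G : MGraph V α) (n : ℕ) : Prop :=
  ∃ x y : V, x ≠ y ∧ ∃ P : Fin n → Finset α,
    (G.E = Finset.univ.biUnion fun i => P i) ∧
    (∀ i j : Fin n, i ≠ j → Disjoint (P i) (P j)) ∧
    (∀ i : Fin n, G.PathBetween (P i) x y) ∧
    (∀ i j : Fin n, i ≠ j → ∀ v, G.VIn (P i) v → G.VIn (P j) v → v = x ∨ v = y)

/-- `G` is a subdivision of `K_2^n` with the edge `e` lying on one of the `n`
paths. -/
def IsK2nSubThrough (G : MGraph V α) (n : ℕ) (e : α) : Prop :=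
  ∃ x y : V, x ≠ y ∧ ∃ P : Fin n → Finset α,
    (G.E = Finset.univ.biUnion fun i => P i) ∧
    (∀ i j : Fin n, i ≠ j → Disjoint (P i) (P j)) ∧
    (∀ i : Fin n, G.PathBetween (P i) x y) ∧
    (∀ i j : Fin n, i ≠ j → ∀ v, G.VIn (P i) v → G.VIn (P j) v → v = x ∨ v = y) ∧
    ∃ i : Fin n, e ∈ P i

/-- `T` is the edge set of a spanning tree of `G`. -/
def IsSpanningTree (G : MGraph V α) (T : Finset α) : Prop :=
  T ⊆ G.E ∧ (∀ C ⊆ T, ¬ G.IsCycle C) ∧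
    ∀ u v : V, Relation.ReflTransGen (G.Adj T) u v

end MGraph

/-! When `L(G)` has at least two circuits, two edges of `G` are in series exactly when every
circuit of `L(G)` contains both or neither of them, so `G₁` and `G₂` have the same series
classes. An ear lies in every cycle it meets, so its edges are pairwise in series; and an ear
contained in an ear is equal to it. Hence, when series classes are ears, the ears are exactly the
series classes, the same for `G₁` and `G₂`.

The substantial step is that lift-series edges are series. Suppose every circuit of `L(G)`
through `e` contains `f`, but some cycle `C ∋ e` avoids `f`. Every other cycle then contains `f`:
otherwise it and `C` would span a circuit of `L(G)` through `e` avoiding `f`. Since the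
symmetric difference of two cycles contains a cycle, any two cycles other than `C` have
symmetric difference exactly `C`. So all cycles lie in a theta subgraph, which is the only
circuit of `L(G)`. -/

open scoped symmDiff

theorem Finset.symmDiff_subset_of_union_eq_union {α : Type} [DecidableEq α] {s t u : Finset α}
    (h : u ∪ s = u ∪ t) : s ∆ t ⊆ u := by
  intro x hx
  have hx' := Finset.ext_iff.1 h x
  rw [mem_union, mem_union] at hx'
  rw [mem_symmDiff] at hx
  tauto

namespace MGraph

open Function

section

variable {V α : Type} {G : MGraph V α}

instance (X : Finset α) : Std.Symm (G.Adj X) where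
  symm _ _ := fun ⟨e, he, huv⟩ => ⟨e, he, huv.trans Sym2.eq_swap⟩

theorem exists_boundary {P S : Finset α} (hPS : P ⊆ S) (hP : P.Nonempty) (hSP : ¬ S ⊆ P)
    (hconn : ∀ u v, G.VIn S u → G.VIn S v → Relation.ReflTransGen (G.Adj S) u v) :
    ∃ w, G.VIn P w ∧ ∃ g ∈ S, g ∉ P ∧ w ∈ G.ends g := by
  obtain ⟨e₀, he₀⟩ := hP
  obtain ⟨u₀, hu₀⟩ : ∃ u, u ∈ G.ends e₀ := ⟨_, Sym2.out_fst_mem _⟩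
  obtain ⟨g₀, hg₀S, hg₀P⟩ := not_subset.1 hSP
  obtain ⟨v₀, hv₀⟩ : ∃ v, v ∈ G.ends g₀ := ⟨_, Sym2.out_fst_mem _⟩
  by_contra! hno
  have hclosed : ∀ v, Relation.ReflTransGen (G.Adj S) u₀ v → G.VIn P v := by
    intro v huv
    induction huv with
    | refl => exact ⟨e₀, he₀, hu₀⟩
    | tail _ hadj ih =>
      obtain ⟨g, hgS, hg⟩ := hadj
      by_cases hgP : g ∈ P
      · exact ⟨g, hgP, hg ▸ Sym2.mem_mk_right _ _⟩
      · exact absurd (hg ▸ Sym2.mem_mk_left _ _) (hno _ ih g hgS hgP)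
  exact hno v₀ (hclosed v₀ (hconn _ _ ⟨e₀, hPS he₀, hu₀⟩ ⟨g₀, hg₀S, hv₀⟩)) g₀ hg₀S hg₀P hv₀

/-- Such paths are grown at `v 0`, so that an edge from `v 0` back to some `v j` closes the
cycle `v 0, …, v j` without reindexing. -/
def IsPathSeq (G : MGraph V α) (T : Finset α) (k : ℕ) (v : ℕ → V) (e : ℕ → α) : Prop :=
  (∀ a ≤ k, ∀ b ≤ k, v a = v b → a = b) ∧ ∀ i < k, e i ∈ T ∧ G.ends (e i) = s(v i, v (i + 1))

namespace IsPathSeq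

variable {T : Finset α} {k : ℕ} {v : ℕ → V} {e : ℕ → α}

theorem edge_injOn (hp : G.IsPathSeq T k v e) {a b : ℕ} (ha : a < k) (hb : b < k)
    (h : e a = e b) : a = b := by
  have hab : s(v a, v (a + 1)) = s(v b, v (b + 1)) := by
    rw [← (hp.2 a ha).2, ← (hp.2 b hb).2, h]
  rcases Sym2.eq_iff.1 hab with ⟨h₁, -⟩ | ⟨h₁, h₂⟩
  · exact hp.1 a ha.le b hb.le h₁
  · have := hp.1 a ha.le (b + 1) hb h₁
    have := hp.1 (a + 1) ha b hb.le h₂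
    omega

theorem le_card (hp : G.IsPathSeq T k v e) : k ≤ #T := by
  classical
  calc k = #((range k).image e) :=
        ((card_image_of_injOn fun a ha b hb h =>
          hp.edge_injOn (mem_range.1 ha) (mem_range.1 hb) h).trans (card_range k)).symm
    _ ≤ #T := card_le_card fun f hf => by
        obtain ⟨i, hi, rfl⟩ := mem_image.1 hf
        exact (hp.2 i (mem_range.1 hi)).1

theorem cons (hp : G.IsPathSeq T k v e) {w : V} (hw : ∀ j ≤ k, v j ≠ w) {f : α} (hf : f ∈ T)
    (hfends : G.ends f = s(w, v 0)) :
    G.IsPathSeq T (k + 1) (fun | 0 => w | j + 1 => v j) (fun | 0 => f | j + 1 => e j) := by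
  refine ⟨?_, ?_⟩
  · rintro (_ | a) ha (_ | b) hb h
    · rfl
    · exact absurd h.symm (hw b (by omega))
    · exact absurd h (hw a (by omega))
    · rw [hp.1 a (by omega) b (by omega) h]
  · rintro (_ | i) hi
    · exact ⟨hf, hfends⟩
    · exact hp.2 i (by omega)

end IsPathSeq

end

section

variable {V α : Type} [DecidableEq V] {G : MGraph V α}

def edgeDeg (G : MGraph V α) (e : α) (v : V) : ℕ :=
  if G.ends e = s(v, v) then 2 else if v ∈ G.ends e then 1 else 0

theorem degIn_eq_sum (X : Finset α) (v : V) : G.degIn X v = ∑ e ∈ X, G.edgeDeg e v := rfl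

theorem edgeDeg_eq_zero_iff {e : α} {v : V} : G.edgeDeg e v = 0 ↔ v ∉ G.ends e := by
  unfold edgeDeg
  split_ifs with hloop hv
  · simp [hloop]
  · simp [hv]
  · simp [hv]

theorem edgeDeg_eq_one {e : α} {v : V} (hv : v ∈ G.ends e) (he : ¬ (G.ends e).IsDiag) :
    G.edgeDeg e v = 1 := by
  have hloop : G.ends e ≠ s(v, v) := fun h => he (h ▸ Sym2.mk_isDiag_iff.2 rfl)
  simp [edgeDeg, hloop, hv]

theorem edgeDeg_of_not_isDiag {e : α} (he : ¬ (G.ends e).IsDiag) (v : V) :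
    G.edgeDeg e v = if v ∈ G.ends e then 1 else 0 := by
  split_ifs with hv
  · exact edgeDeg_eq_one hv he
  · exact edgeDeg_eq_zero_iff.2 hv

theorem degIn_singleton (e : α) (v : V) : G.degIn {e} v = G.edgeDeg e v :=
  sum_singleton _ _

theorem degIn_eq_zero_iff {X : Finset α} {v : V} : G.degIn X v = 0 ↔ ¬ G.VIn X v := by
  simp [degIn_eq_sum, edgeDeg_eq_zero_iff, VIn]

theorem degIn_pos_iff {X : Finset α} {v : V} : 0 < G.degIn X v ↔ G.VIn X v := by
  rw [Nat.pos_iff_ne_zero, Ne, degIn_eq_zero_iff, not_not]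

theorem degIn_mono {X Y : Finset α} (h : X ⊆ Y) (v : V) : G.degIn X v ≤ G.degIn Y v :=
  sum_le_sum_of_subset h

theorem degIn_add_sdiff [DecidableEq α] {X Y : Finset α} (h : X ⊆ Y) (v : V) :
    G.degIn X v + G.degIn (Y \ X) v = G.degIn Y v := by
  rw [degIn_eq_sum, degIn_eq_sum, degIn_eq_sum, add_comm, sum_sdiff h]

theorem degIn_insert [DecidableEq α] {X : Finset α} {e : α} (he : e ∉ X) (v : V) :
    G.degIn (insert e X) v = G.edgeDeg e v + G.degIn X v :=
  sum_insert he

theorem even_degIn_symmDiff [DecidableEq α] {A B : Finset α} {v : V}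
    (hA : Even (G.degIn A v)) (hB : Even (G.degIn B v)) : Even (G.degIn (A ∆ B) v) := by
  have hsplit := G.degIn_add_sdiff (inter_subset_union (s := A) (t := B)) v
  have hsum : G.degIn (A ∪ B) v + G.degIn (A ∩ B) v = G.degIn A v + G.degIn B v :=
    sum_union_inter
  rw [symmDiff_eq_sup_sdiff_inf, sup_eq_union, inf_eq_inter]
  obtain ⟨a, ha⟩ := hA
  obtain ⟨b, hb⟩ := hB
  exact ⟨a + b - G.degIn (A ∩ B) v, by omega⟩

theorem IsCycle.eq_of_subset {C D : Finset α} (hC : G.IsCycle C) (hD : G.IsCycle D)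
    (h : C ⊆ D) : C = D := by
  classical
  by_contra hne
  obtain ⟨w, hw, g, hgD, hgC, hwg⟩ :=
    exists_boundary h hC.1 (fun h' => hne (h.antisymm h')) hD.2.2.2
  have hsplit := G.degIn_add_sdiff h w
  have hpos := degIn_pos_iff.2 ⟨g, mem_sdiff.2 ⟨hgD, hgC⟩, hwg⟩
  obtain ⟨f, hf, hwf⟩ := hw
  rw [hC.2.2.1 w ⟨f, hf, hwf⟩, hD.2.2.1 w ⟨f, h hf, hwf⟩] at hsplit
  omega

theorem isCycle_singleton {e : α} (he : e ∈ G.E) (hloop : (G.ends e).IsDiag) :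
    G.IsCycle {e} := by
  obtain ⟨v, hv⟩ : ∃ v, G.ends e = s(v, v) := by
    induction h : G.ends e using Sym2.ind with
    | _ x y => exact ⟨x, by rw [h, Sym2.mk_isDiag_iff] at hloop; rw [hloop]⟩
  have hmem : ∀ {u}, u ∈ G.ends e → u = v := fun hu => by simpa [hv] using hu
  refine ⟨singleton_nonempty e, singleton_subset_iff.2 he, ?_, ?_⟩
  · rintro u ⟨f, hf, hu⟩
    rw [mem_singleton.1 hf] at hu
    simp [degIn_eq_sum, edgeDeg, hmem hu, hv]
  · rintro u w ⟨f, hf, hu⟩ ⟨f', hf', hw⟩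
    rw [mem_singleton.1 hf] at hu
    rw [mem_singleton.1 hf'] at hw
    rw [hmem hu, hmem hw]

theorem IsPath.not_isDiag {P : Finset α} (hP : G.IsPath P) {e : α} (he : e ∈ P) :
    ¬ (G.ends e).IsDiag := fun hloop =>
  hP.2.2.1 {e} (singleton_subset_iff.2 he) (isCycle_singleton (hP.2.1 he) hloop)

theorem IsCycle.even_degIn {C : Finset α} (hC : G.IsCycle C) (v : V) : Even (G.degIn C v) := by
  by_cases hv : G.VIn C v
  · rw [hC.2.2.1 v hv]; exact even_two
  · rw [degIn_eq_zero_iff.2 hv]; exact ⟨0, rfl⟩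

theorem isCycle_map_of_cyclic {n : ℕ} {v : Fin (n + 2) → V} {e : Fin (n + 2) ↪ α}
    (hv : Injective v) (hE : ∀ i, e i ∈ G.E) (hends : ∀ i, G.ends (e i) = s(v i, v (i + 1))) :
    G.IsCycle (univ.map e) := by
  have hloop : ∀ i, ¬ (G.ends (e i)).IsDiag := fun i => by
    simp [hends, hv.eq_iff]
  have hmem : ∀ i j, v i ∈ G.ends (e j) ↔ j = i ∨ j = i - 1 := fun i j => by
    rw [hends, Sym2.mem_iff, hv.eq_iff, hv.eq_iff, eq_sub_iff_add_eq, eq_comm, eq_comm (a := i)]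
  have hvert : ∀ x, G.VIn (univ.map e) x → ∃ i, x = v i := by
    rintro x ⟨f, hf, hx⟩
    obtain ⟨j, -, rfl⟩ := mem_map.1 hf
    rw [hends, Sym2.mem_iff] at hx
    exact hx.elim (⟨j, ·⟩) (⟨j + 1, ·⟩)
  have hreach : ∀ i, Relation.ReflTransGen (G.Adj (univ.map e)) (v 0) (v i) := by
    intro i
    induction i using Fin.induction with
    | zero => exact .refl
    | succ i ih =>
      refine ih.tail ⟨e i.castSucc, mem_map_of_mem _ (mem_univ _), ?_⟩
      rw [hends, Fin.coeSucc_eq_succ]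
  refine ⟨map_nonempty.2 univ_nonempty, ?_, ?_, ?_⟩
  · intro f hf
    obtain ⟨j, -, rfl⟩ := mem_map.1 hf
    exact hE j
  · intro x hx
    obtain ⟨i, rfl⟩ := hvert x hx
    have hpair : ({j | j = i ∨ j = i - 1} : Finset (Fin (n + 2))) = {i, i - 1} := by
      ext j; simp
    rw [degIn_eq_sum, sum_map]
    simp only [edgeDeg_of_not_isDiag (hloop _), hmem, sum_boole, hpair]
    rw [card_pair (by rw [ne_eq, eq_sub_iff_add_eq, add_eq_left]; exact one_ne_zero)]
    rfl
  · intro x y hx hy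
    obtain ⟨a, rfl⟩ := hvert x hx
    obtain ⟨b, rfl⟩ := hvert y hy
    exact (Std.Symm.symm _ _ (hreach a)).trans (hreach b)

namespace IsPathSeq

variable {T : Finset α} {k : ℕ} {v : ℕ → V} {e : ℕ → α}

theorem exists_isCycle_of_closing (hp : G.IsPathSeq T k v e) (hTE : T ⊆ G.E) {j : ℕ}
    (hj : 0 < j) (hjk : j ≤ k) {f : α} (hf : f ∈ T) (hfends : G.ends f = s(v 0, v j))
    (hfe : ∀ i < j, e i ≠ f) : ∃ Z ⊆ T, G.IsCycle Z := by
  obtain ⟨n, rfl⟩ : ∃ n, j = n + 1 := ⟨j - 1, by omega⟩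
  let e' : Fin (n + 2) → α := fun i => if i = Fin.last _ then f else e i
  have hlt : ∀ i : Fin (n + 2), i ≠ Fin.last _ → (i : ℕ) < n + 1 := fun i hi =>
    Fin.val_lt_last hi
  have he'T : ∀ i, e' i ∈ T := fun i => by
    unfold e'; split_ifs with hi
    · exact hf
    · exact (hp.2 i (by have := hlt i hi; omega)).1
  have he' : Injective e' := by
    intro a b hab
    unfold e' at hab
    split_ifs at hab with ha hb hb
    · rw [ha, hb]
    · exact absurd hab.symm (hfe b (hlt b hb))
    · exact absurd hab (hfe a (hlt a ha))
    · exact Fin.ext (hp.edge_injOn (by have := hlt a ha; omega) (by have := hlt b hb; omega) hab)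
  refine ⟨univ.map ⟨e', he'⟩, fun g hg => ?_, isCycle_map_of_cyclic (v := fun i => v i) ?_
    (fun i => hTE (he'T i)) ?_⟩
  · obtain ⟨i, -, rfl⟩ := mem_map.1 hg
    exact he'T i
  · intro a b hab
    exact Fin.ext (hp.1 a (by omega) b (by omega) hab)
  · intro i
    simp only [Embedding.coeFn_mk, e', Fin.val_add_one]
    split_ifs with hi
    · rw [hfends, Sym2.eq_swap, hi]; rfl
    · exact (hp.2 i (by have := hlt i hi; omega)).2

theorem exists_isCycle_or_extend (hp : G.IsPathSeq T (k + 1) v e) (hTE : T ⊆ G.E)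
    (hloop : ∀ g ∈ T, ¬ (G.ends g).IsDiag) (hdeg : ∀ x, G.VIn T x → 2 ≤ G.degIn T x) :
    (∃ Z ⊆ T, G.IsCycle Z) ∨ ∃ v' e', G.IsPathSeq T (k + 2) v' e' := by
  classical
  obtain ⟨he₀T, he₀⟩ := hp.2 0 k.succ_pos
  have hu : v 0 ∈ G.ends (e 0) := he₀ ▸ Sym2.mem_mk_left _ _
  obtain ⟨f, hf, hfu⟩ : G.VIn (T.erase (e 0)) (v 0) := by
    have hsplit : G.edgeDeg (e 0) (v 0) + G.degIn (T.erase (e 0)) (v 0) = G.degIn T (v 0) :=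
      add_sum_erase T (fun g => G.edgeDeg g (v 0)) he₀T
    have := hdeg _ ⟨e 0, he₀T, hu⟩
    rw [edgeDeg_eq_one hu (hloop _ he₀T)] at hsplit
    exact degIn_pos_iff.1 (by omega)
  obtain ⟨hfe₀, hfT⟩ := mem_erase.1 hf
  obtain ⟨w, hfends⟩ := Sym2.mem_iff_exists.1 hfu
  by_cases hw : ∃ j ≤ k + 1, v j = w
  · obtain ⟨j, hj, rfl⟩ := hw
    have hj0 : 0 < j := Nat.pos_of_ne_zero fun h =>
      hloop f hfT (by rw [hfends, h]; exact Sym2.mk_isDiag_iff.2 rfl)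
    refine .inl (hp.exists_isCycle_of_closing hTE hj0 hj hfT hfends fun i hi hif => hfe₀ ?_)
    have hi0 : i = 0 := by
      have : v 0 ∈ G.ends (e i) := hif ▸ hfu
      rw [(hp.2 i (by omega)).2, Sym2.mem_iff] at this
      rcases this with h | h
      · exact (hp.1 0 (by omega) i (by omega) h).symm
      · exact absurd (hp.1 0 (by omega) (i + 1) (by omega) h) (by omega)
    rw [← hif, hi0]
  · push Not at hw
    exact .inr ⟨_, _, hp.cons hw hfT (hfends.trans Sym2.eq_swap)⟩

end IsPathSeq

theorem exists_isCycle_of_two_le_degIn {T : Finset α} (hTE : T ⊆ G.E) (hT : T.Nonempty)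
    (hloop : ∀ g ∈ T, ¬ (G.ends g).IsDiag) (hdeg : ∀ x, G.VIn T x → 2 ≤ G.degIn T x) :
    ∃ Z ⊆ T, G.IsCycle Z := by
  obtain ⟨a, ha⟩ := hT
  obtain ⟨x, hx⟩ : ∃ x, x ∈ G.ends a := ⟨_, Sym2.out_fst_mem _⟩
  obtain ⟨y, hxy⟩ := Sym2.mem_iff_exists.1 hx
  have hne : x ≠ y := fun h => hloop a ha (by rw [hxy, h]; exact Sym2.mk_isDiag_iff.2 rfl)
  have hstart : G.IsPathSeq T 1 (fun | 0 => x | _ + 1 => y) (fun _ => a) := by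
    refine ⟨?_, fun i hi => ?_⟩
    · rintro (_ | a) ha (_ | b) hb h
      · rfl
      · exact absurd h hne
      · exact absurd h.symm hne
      · omega
    · obtain rfl : i = 0 := by omega
      exact ⟨ha, hxy⟩
  have hgrow : ∀ n, (∃ Z ⊆ T, G.IsCycle Z) ∨ ∃ v e, G.IsPathSeq T (n + 1) v e := by
    intro n
    induction n with
    | zero => exact .inr ⟨_, _, hstart⟩
    | succ n ih =>
      obtain hZ | ⟨v, e, hp⟩ := ih
      · exact .inl hZ
      · exact hp.exists_isCycle_or_extend hTE hloop hdeg
  obtain hZ | ⟨v, e, hp⟩ := hgrow #T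
  · exact hZ
  · exact absurd hp.le_card (by omega)

theorem exists_isCycle_of_even {T : Finset α} (hTE : T ⊆ G.E) (hT : T.Nonempty)
    (heven : ∀ x, Even (G.degIn T x)) : ∃ Z ⊆ T, G.IsCycle Z := by
  by_cases hloop : ∃ g ∈ T, (G.ends g).IsDiag
  · obtain ⟨g, hg, hgloop⟩ := hloop
    exact ⟨{g}, singleton_subset_iff.2 hg, isCycle_singleton (hTE hg) hgloop⟩
  push Not at hloop
  refine exists_isCycle_of_two_le_degIn hTE hT hloop fun x hx => ?_
  obtain ⟨m, hm⟩ := heven x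
  have := degIn_pos_iff.2 hx
  omega

theorem IsCycle.exists_isCycle_subset_symmDiff [DecidableEq α] {A B : Finset α}
    (hA : G.IsCycle A) (hB : G.IsCycle B) (hne : A ≠ B) : ∃ Z ⊆ A ∆ B, G.IsCycle Z :=
  exists_isCycle_of_even
    (fun _ hg => (mem_union.1 (symmDiff_subset_union hg)).elim (hA.2.1 ·) (hB.2.1 ·))
    (symmDiff_nonempty.2 hne) fun x => even_degIn_symmDiff (hA.even_degIn x) (hB.even_degIn x)

theorem eq_of_even_of_forall_isCycle [DecidableEq α] {S C : Finset α} (hSE : S ⊆ G.E)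
    (hS : S.Nonempty) (heven : ∀ x, Even (G.degIn S x)) (hC : G.IsCycle C)
    (honly : ∀ Z ⊆ S, G.IsCycle Z → Z = C) : S = C := by
  obtain ⟨Z, hZS, hZ⟩ := exists_isCycle_of_even hSE hS heven
  have hCS : C ⊆ S := honly Z hZS hZ ▸ hZS
  by_contra hne
  have hrest : ∀ x, Even (G.degIn (S \ C) x) := fun x => by
    have heS := heven x
    rw [← G.degIn_add_sdiff hCS x] at heS
    exact (Nat.even_add.1 heS).1 (hC.even_degIn x)
  obtain ⟨Z', hZ'S, hZ'⟩ := exists_isCycle_of_even (sdiff_subset.trans hSE)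
    (sdiff_nonempty.2 fun h => hne (h.antisymm hCS)) hrest
  obtain ⟨c, hc⟩ := hC.1
  rw [honly Z' (hZ'S.trans sdiff_subset) hZ'] at hZ'S
  exact (mem_sdiff.1 (hZ'S hc)).2 hc

theorem LiftCircuit.eq_union [DecidableEq α] {X A B : Finset α} (hX : G.LiftCircuit X)
    (hA : G.IsCycle A) (hB : G.IsCycle B) (hne : A ≠ B) (hAX : A ⊆ X) (hBX : B ⊆ X) :
    X = A ∪ B := by
  by_contra h
  exact hX.2.2 _ (ssubset_of_subset_of_ne (union_subset hAX hBX) (Ne.symm h))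
    ⟨A, B, hA, hB, subset_union_left, subset_union_right, hne⟩

theorem LiftCircuit.exists_eq_union [DecidableEq α] {X : Finset α} (hX : G.LiftCircuit X) :
    ∃ A B, G.IsCycle A ∧ G.IsCycle B ∧ A ≠ B ∧ X = A ∪ B := by
  obtain ⟨A, B, hA, hB, hAX, hBX, hne⟩ := hX.2.1
  exact ⟨A, B, hA, hB, hne, hX.eq_union hA hB hne hAX hBX⟩

theorem IsCycle.union_ne_union [DecidableEq α] {C A B : Finset α} (hC : G.IsCycle C)
    (hA : G.IsCycle A) (hB : G.IsCycle B) (hne : A ≠ B) {e : α} (heC : e ∈ C)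
    (he : e ∉ A ∪ B) : C ∪ A ≠ C ∪ B := fun h => by
  obtain ⟨Z, hZ, hZcyc⟩ := hA.exists_isCycle_subset_symmDiff hB hne
  rw [hZcyc.eq_of_subset hC (hZ.trans (symmDiff_subset_of_union_eq_union h))] at hZ
  exact he (symmDiff_subset_union (hZ heC))

theorem exists_liftCircuit_mem_subset_union [DecidableEq α] {A B : Finset α} (hA : G.IsCycle A)
    (hB : G.IsCycle B) (hne : A ≠ B) {e : α} (he : e ∈ A ∪ B) :
    ∃ X, G.LiftCircuit X ∧ X ⊆ A ∪ B ∧ e ∈ X := by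
  induction hn : #(A ∪ B) using Nat.strong_induction_on generalizing A B with
  | _ n ih =>
    by_cases hmin : ∀ Y ⊂ A ∪ B, ¬ G.TwoCycles Y
    · exact ⟨A ∪ B, ⟨union_subset hA.2.1 hB.2.1,
        ⟨A, B, hA, hB, subset_union_left, subset_union_right, hne⟩, hmin⟩, subset_rfl, he⟩
    push Not at hmin
    obtain ⟨Y, hY, A', B', hA', hB', hA'Y, hB'Y, hne'⟩ := hmin
    have recurse : ∀ {A'' B''}, G.IsCycle A'' → G.IsCycle B'' → A'' ≠ B'' →
        A'' ∪ B'' ⊂ A ∪ B → e ∈ A'' ∪ B'' → ∃ X, G.LiftCircuit X ∧ X ⊆ A ∪ B ∧ e ∈ X :=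
      fun hA'' hB'' hne'' hss he'' =>
        let ⟨X, hX, hXsub, heX⟩ := ih _ (hn ▸ card_lt_card hss) hA'' hB'' hne'' he'' rfl
        ⟨X, hX, hXsub.trans hss.subset, heX⟩
    have hsub : A' ∪ B' ⊂ A ∪ B := (union_subset hA'Y hB'Y).trans_ssubset hY
    by_cases he' : e ∈ A' ∪ B'
    · exact recurse hA' hB' hne' hsub he'
    obtain ⟨C, hC, heC, hCsub⟩ : ∃ C, G.IsCycle C ∧ e ∈ C ∧ C ⊆ A ∪ B :=
      (mem_union.1 he).elim (⟨A, hA, ·, subset_union_left⟩) (⟨B, hB, ·, subset_union_right⟩)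
    have hCA' : C ≠ A' := fun h => he' (mem_union_left _ (h ▸ heC))
    have hCB' : C ≠ B' := fun h => he' (mem_union_right _ (h ▸ heC))
    by_cases hA'eq : C ∪ A' = A ∪ B
    · by_cases hB'eq : C ∪ B' = A ∪ B
      · exact absurd (hA'eq.trans hB'eq.symm) (hC.union_ne_union hA' hB' hne' heC he')
      · exact recurse hC hB' hCB' (ssubset_of_subset_of_ne
          (union_subset hCsub (hB'Y.trans hY.subset)) hB'eq) (mem_union_left _ heC)
    · exact recurse hC hA' hCA' (ssubset_of_subset_of_ne
        (union_subset hCsub (hA'Y.trans hY.subset)) hA'eq) (mem_union_left _ heC)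

section Theta

variable [DecidableEq α] {C : Finset α} {f : α}

theorem symmDiff_eq_of_forall_mem (hC : G.IsCycle C) (hf : ∀ D, G.IsCycle D → D ≠ C → f ∈ D)
    {E₁ E₂ : Finset α} (h₁ : G.IsCycle E₁) (h₂ : G.IsCycle E₂) (hne : E₁ ≠ E₂) (h₁C : E₁ ≠ C)
    (h₂C : E₂ ≠ C) : E₁ ∆ E₂ = C :=
  eq_of_even_of_forall_isCycle
    (fun _ hg => (mem_union.1 (symmDiff_subset_union hg)).elim (h₁.2.1 ·) (h₂.2.1 ·))
    (symmDiff_nonempty.2 hne) (fun x => even_degIn_symmDiff (h₁.even_degIn x) (h₂.even_degIn x))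
    hC fun Z hZ hZcyc => by
      by_contra hZC
      rcases mem_symmDiff.1 (hZ (hf Z hZcyc hZC)) with h | h
      exacts [h.2 (hf E₂ h₂ h₂C), h.2 (hf E₁ h₁ h₁C)]

theorem isCycle_subset_liftCircuit_of_forall_mem (hC : G.IsCycle C)
    (hf : ∀ D, G.IsCycle D → D ≠ C → f ∈ D) {D X : Finset α} (hD : G.IsCycle D)
    (hX : G.LiftCircuit X) : D ⊆ X := by
  obtain ⟨A, B, hA, hB, hAB, rfl⟩ := hX.exists_eq_union
  by_cases hDA : D = A
  · exact hDA ▸ subset_union_left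
  by_cases hDB : D = B
  · exact hDB ▸ subset_union_right
  have hsub : ∀ {E}, G.IsCycle E → D ≠ E → E ≠ C → D ≠ C → D ⊆ C ∪ E :=
    fun hE hDE hEC hDC t ht => by
      rw [← symmDiff_eq_of_forall_mem hC hf hD hE hDE hDC hEC, mem_union, mem_symmDiff]
      tauto
  by_cases hDC : D = C
  · rw [hDC, ← symmDiff_eq_of_forall_mem hC hf hA hB hAB (hDC ▸ Ne.symm hDA)
      (hDC ▸ Ne.symm hDB)]
    exact symmDiff_subset_union
  by_cases hAC : A = C
  · exact hAC ▸ hsub hB hDB (fun h => hAB (hAC.trans h.symm)) hDC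
  by_cases hBC : B = C
  · exact (hsub hA hDA hAC hDC).trans (by rw [hBC, union_comm])
  exact absurd ((symmDiff_right_inj (a := D)).1
    ((symmDiff_eq_of_forall_mem hC hf hD hA hDA hDC hAC).trans
      (symmDiff_eq_of_forall_mem hC hf hD hB hDB hDC hBC).symm)) hAB

theorem LiftCircuit.eq_of_forall_mem (hC : G.IsCycle C) (hf : ∀ D, G.IsCycle D → D ≠ C → f ∈ D)
    {X Y : Finset α} (hX : G.LiftCircuit X) (hY : G.LiftCircuit Y) : X = Y := by
  have hsub : ∀ {X Y}, G.LiftCircuit X → G.LiftCircuit Y → X ⊆ Y := fun hX hY => by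
    obtain ⟨A, B, hA, hB, -, rfl⟩ := hX.exists_eq_union
    exact union_subset (isCycle_subset_liftCircuit_of_forall_mem hC hf hA hY)
      (isCycle_subset_liftCircuit_of_forall_mem hC hf hB hY)
  exact (hsub hX hY).antisymm (hsub hY hX)

end Theta

theorem mem_of_forall_liftCircuit (h2 : G.TwoLiftCircuits) {e f : α}
    (hef : ∀ X, G.LiftCircuit X → e ∈ X → f ∈ X) {C : Finset α} (hC : G.IsCycle C)
    (heC : e ∈ C) : f ∈ C := by
  classical
  by_contra hfC
  by_cases hD : ∃ D, G.IsCycle D ∧ D ≠ C ∧ f ∉ D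
  · obtain ⟨D, hD, hDC, hfD⟩ := hD
    obtain ⟨X, hX, hXsub, heX⟩ :=
      exists_liftCircuit_mem_subset_union hC hD hDC.symm (mem_union_left _ heC)
    rcases mem_union.1 (hXsub (hef X hX heX)) with h | h
    exacts [hfC h, hfD h]
  · push Not at hD
    obtain ⟨X, Y, hX, hY, hXY⟩ := h2
    exact hXY (hX.eq_of_forall_mem hC hD hY)

theorem seriesPair_iff_forall_liftCircuit (h2 : G.TwoLiftCircuits) {e f : α} :
    G.SeriesPair e f ↔ e ∈ G.E ∧ f ∈ G.E ∧ ∀ X, G.LiftCircuit X → (e ∈ X ↔ f ∈ X) := by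
  classical
  constructor
  · rintro ⟨he, hf, hs⟩
    refine ⟨he, hf, fun X hX => ?_⟩
    obtain ⟨A, B, hA, hB, -, rfl⟩ := hX.exists_eq_union
    simp only [mem_union, hs A hA, hs B hB]
  · rintro ⟨he, hf, hs⟩
    exact ⟨he, hf, fun C hC => ⟨mem_of_forall_liftCircuit h2 (fun X hX => (hs X hX).1) hC,
      mem_of_forall_liftCircuit h2 (fun X hX => (hs X hX).2) hC⟩⟩

theorem seriesPair_refl {e : α} (he : e ∈ G.E) : G.SeriesPair e e :=
  ⟨he, he, fun _ _ => Iff.rfl⟩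

theorem SeriesPair.symm {e f : α} (h : G.SeriesPair e f) : G.SeriesPair f e :=
  ⟨h.2.1, h.1, fun C hC => (h.2.2 C hC).symm⟩

theorem SeriesPair.trans {e f g : α} (h₁ : G.SeriesPair e f) (h₂ : G.SeriesPair f g) :
    G.SeriesPair e g :=
  ⟨h₁.1, h₂.2.1, fun C hC => (h₁.2.2 C hC).trans (h₂.2.2 C hC)⟩

open Classical in
noncomputable def seriesClassOf (G : MGraph V α) (e : α) : Finset α :=
  {g ∈ G.E | G.SeriesPair e g}

theorem mem_seriesClassOf {e g : α} : g ∈ G.seriesClassOf e ↔ g ∈ G.E ∧ G.SeriesPair e g := by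
  simp [seriesClassOf]

theorem seriesClass_seriesClassOf {e : α} (he : e ∈ G.E) :
    G.SeriesClass (G.seriesClassOf e) := by
  have hee : e ∈ G.seriesClassOf e := mem_seriesClassOf.2 ⟨he, seriesPair_refl he⟩
  exact ⟨fun _ hg => (mem_seriesClassOf.1 hg).1, ⟨e, hee⟩,
    fun _ ha _ hb => (mem_seriesClassOf.1 ha).2.symm.trans (mem_seriesClassOf.1 hb).2,
    fun _ hg hall => mem_seriesClassOf.2 ⟨hg, hall e hee⟩⟩

theorem IsEar.subset_of_isCycle {P C : Finset α} (hP : G.IsEar P) (hC : G.IsCycle C) {a : α}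
    (haP : a ∈ P) (haC : a ∈ C) : P ⊆ C := by
  classical
  by_contra hPC
  obtain ⟨w, ⟨h, hhPC, hwh⟩, g, hgP, hgPC, hwg⟩ := exists_boundary inter_subset_left
    ⟨a, mem_inter.2 ⟨haP, haC⟩⟩ (fun h => hPC fun t ht => (mem_inter.1 (h ht)).2) hP.1.2.2.2.2
  obtain ⟨hhP, hhC⟩ := mem_inter.1 hhPC
  have hgC : g ∉ C := fun hgC => hgPC (mem_inter.2 ⟨hgP, hgC⟩)
  have hhg : h ≠ g := fun hhg => hgC (hhg ▸ hhC)
  -- two edges of the ear meet at `w`, so `w` is an inner vertex of the ear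
  have hdegP : G.degIn P w = 2 := by
    refine le_antisymm (hP.1.2.2.2.1 w ⟨h, hhP, hwh⟩) ?_
    calc 2 = G.degIn {h, g} w := by
          rw [degIn_insert (by simpa using hhg), degIn_singleton, edgeDeg_eq_one hwh
            (hP.1.not_isDiag hhP), edgeDeg_eq_one hwg (hP.1.not_isDiag hgP)]
      _ ≤ G.degIn P w := degIn_mono (insert_subset hhP (singleton_subset_iff.2 hgP)) w
  -- but `C` already has degree two at `w`, and `g ∉ C` is a third edge there
  have hdegE : 3 ≤ G.degIn G.E w :=
    calc 3 = G.degIn (insert g C) w := by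
          rw [degIn_insert hgC, edgeDeg_eq_one hwg (hP.1.not_isDiag hgP),
            hC.2.2.1 w ⟨h, hhC, hwh⟩]
      _ ≤ G.degIn G.E w := degIn_mono (insert_subset (hP.1.2.1 hgP) hC.2.1) w
  have := hP.2.1 w hdegP
  omega

theorem IsEar.seriesPair {P : Finset α} (hP : G.IsEar P) {a b : α} (ha : a ∈ P) (hb : b ∈ P) :
    G.SeriesPair a b :=
  ⟨hP.1.2.1 ha, hP.1.2.1 hb, fun _ hC =>
    ⟨fun h => hP.subset_of_isCycle hC ha h hb, fun h => hP.subset_of_isCycle hC hb h ha⟩⟩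

theorem IsEar.eq_of_subset {P Q : Finset α} (hP : G.IsEar P) (hQ : G.IsEar Q) (hPQ : P ⊆ Q) :
    P = Q := by
  classical
  by_contra hne
  obtain ⟨w, hw, g, hgQ, hgP, hwg⟩ :=
    exists_boundary hPQ hP.1.1 (fun h => hne (hPQ.antisymm h)) hQ.1.2.2.2.2
  have hsplit := G.degIn_add_sdiff hPQ w
  have hrest := degIn_pos_iff.2 ⟨g, mem_sdiff.2 ⟨hgQ, hgP⟩, hwg⟩
  have hPw := degIn_pos_iff.2 hw
  have hQw := hQ.1.2.2.2.1 w (degIn_pos_iff.1 (hsplit ▸ by omega))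
  -- `w` is an end of `P` but an inner vertex of `Q`
  have hend := hP.2.2.1 w (by omega)
  have hinner := hQ.2.1 w (by omega)
  omega

theorem IsEar.eq_seriesClassOf (hser : ∀ X, G.SeriesClass X → G.IsEar X) {P : Finset α}
    (hP : G.IsEar P) {e : α} (he : e ∈ P) : P = G.seriesClassOf e :=
  hP.eq_of_subset (hser _ (seriesClass_seriesClassOf (hP.1.2.1 he))) fun _ hg =>
    mem_seriesClassOf.2 ⟨hP.1.2.1 hg, hP.seriesPair he hg⟩

end

section

variable {V₁ V₂ α : Type} [DecidableEq V₁] [DecidableEq V₂] {G₁ : MGraph V₁ α}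
  {G₂ : MGraph V₂ α}

theorem LiftEq.symm (hL : G₁.LiftEq G₂) : G₂.LiftEq G₁ :=
  ⟨hL.1.symm, fun X => (hL.2 X).symm⟩

theorem LiftEq.twoLiftCircuits (hL : G₁.LiftEq G₂) (h2 : G₁.TwoLiftCircuits) :
    G₂.TwoLiftCircuits :=
  let ⟨X, Y, hX, hY, hXY⟩ := h2
  ⟨X, Y, (hL.2 X).1 hX, (hL.2 Y).1 hY, hXY⟩

theorem LiftEq.seriesPair_iff (hL : G₁.LiftEq G₂) (h2 : G₁.TwoLiftCircuits) {e f : α} :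
    G₁.SeriesPair e f ↔ G₂.SeriesPair e f := by
  rw [seriesPair_iff_forall_liftCircuit h2,
    seriesPair_iff_forall_liftCircuit (hL.twoLiftCircuits h2), hL.1]
  simp only [hL.2]

theorem LiftEq.seriesClassOf_eq (hL : G₁.LiftEq G₂) (h2 : G₁.TwoLiftCircuits) (e : α) :
    G₁.seriesClassOf e = G₂.seriesClassOf e := by
  ext g
  rw [mem_seriesClassOf, mem_seriesClassOf, hL.1, hL.seriesPair_iff h2]

theorem LiftEq.isEar_of_isEar (hL : G₁.LiftEq G₂) (h2 : G₁.TwoLiftCircuits)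
    (hser₁ : ∀ X, G₁.SeriesClass X → G₁.IsEar X) (hser₂ : ∀ X, G₂.SeriesClass X → G₂.IsEar X)
    {P : Finset α} (hP : G₁.IsEar P) : G₂.IsEar P := by
  obtain ⟨e, he⟩ := hP.1.1
  rw [hP.eq_seriesClassOf hser₁ he, hL.seriesClassOf_eq h2]
  exact hser₂ _ (seriesClass_seriesClassOf (hL.1 ▸ hP.1.2.1 he))

end

end MGraph

theorem ear_iff_ear_of_liftEq_general
    {V₁ V₂ α : Type} [DecidableEq V₁] [DecidableEq V₂]
    (G₁ : MGraph V₁ α) (G₂ : MGraph V₂ α)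
    (hL : G₁.LiftEq G₂) (h2 : G₁.TwoLiftCircuits)
    (hser₁ : ∀ X : Finset α, G₁.SeriesClass X → G₁.IsEar X)
    (hser₂ : ∀ X : Finset α, G₂.SeriesClass X → G₂.IsEar X) :
    ∀ P : Finset α, G₁.IsEar P ↔ G₂.IsEar P :=
  fun _ => ⟨hL.isEar_of_isEar h2 hser₁ hser₂,
    hL.symm.isEar_of_isEar (hL.twoLiftCircuits h2) hser₂ hser₁⟩

/-- under `L(G₁) = L(G₂)` with at least two circuits, for connected
2-edge-connected graphs whose series classes are ears, the ears of `G₁` and `G₂`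
have the same edge sets. -/
theorem ear_iff_ear_of_liftEq
    {V₁ V₂ α : Type} [DecidableEq V₁] [DecidableEq V₂] [DecidableEq α]
    (G₁ : MGraph V₁ α) (G₂ : MGraph V₂ α)
    (hc₁ : G₁.Connected) (hc₂ : G₂.Connected)
    (h2ec₁ : G₁.TwoEdgeConnected) (h2ec₂ : G₂.TwoEdgeConnected)
    (hL : G₁.LiftEq G₂) (h2 : G₁.TwoLiftCircuits)
    (hser₁ : ∀ X : Finset α, G₁.SeriesClass X → G₁.IsEar X)
    (hser₂ : ∀ X : Finset α, G₂.SeriesClass X → G₂.IsEar X) :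
    ∀ P : Finset α, G₁.IsEar P ↔ G₂.IsEar P :=
  ear_iff_ear_of_liftEq_general G₁ G₂ hL h2 hser₁ hser₂
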